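/- Let ν_d be Lebesgue measure on ℝ^d restricted to the closed unit ball B^d. Then ν_d(B(e_1, √5/2)) ≤ (16/(3(d+1))) (√55/8)^{d+1} λ^{d-1}(B^{d-1}). -/

import Mathlib

/-!
Cut the lens `B(e₁, √5/2) ∩ B^d` by the hyperplane `x₁ = 3/8`. The part with `x₁ ≥ 3/8` is a cap
of the unit ball at height `3/8`; the rest is mapped by the point reflection `x ↦ e₁ - x` into a
cap of `B(0, √5/2)` at height `5/8`. Both caps have base radius `√55/8`. By Fubini, a cap of
`B(0, R)` at height `h > 0` has volume `λ^{d-1}(B^{d-1}) ∫_h^R (R² - t²)^{(d-1)/2} dt`, and inserting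
the factor `t/h ≥ 1` makes the integrand exact, so the volume is at most
`λ^{d-1}(B^{d-1}) (R² - h²)^{(d+1)/2} / ((d+1) h)`. The two caps contribute
`(8/3 + 8/5)/(d+1) ≤ 16/(3(d+1))` times `(√55/8)^{d+1} λ^{d-1}(B^{d-1})`.
-/

open MeasureTheory Metric intervalIntegral
open scoped ENNReal

lemma integral_mul_sqrt_sq_sub_sq_pow (m : ℕ) {a b R : ℝ} (hRa : -R ≤ a) (hab : a ≤ b)
    (hbR : b ≤ R) :
    ∫ s in a..b, s * √(R ^ 2 - s ^ 2) ^ m =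
      (√(R ^ 2 - a ^ 2) ^ (m + 2) - √(R ^ 2 - b ^ 2) ^ (m + 2)) / (m + 2) := by
  have hderiv : ∀ s ∈ Set.Ioo a b,
      HasDerivAt (fun s => -(√(R ^ 2 - s ^ 2) ^ (m + 2) / (m + 2))) (s * √(R ^ 2 - s ^ 2) ^ m) s := by
    rintro s ⟨has, hsb⟩
    have hpos : 0 < R ^ 2 - s ^ 2 := by nlinarith
    have hsq : HasDerivAt (fun s => R ^ 2 - s ^ 2) (-(2 * s)) s := by
      simpa using (hasDerivAt_pow 2 s).const_sub (R ^ 2)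
    refine (((hsq.sqrt hpos.ne').pow (m + 2)).div_const ((m : ℝ) + 2)).neg.congr_deriv ?_
    have := Real.sqrt_pos.2 hpos
    push_cast
    field_simp
    ring
  rw [integral_eq_sub_of_hasDerivAt_of_le hab (by fun_prop) hderiv
    (Continuous.intervalIntegrable (by fun_prop) _ _)]
  ring

lemma integral_sqrt_sq_sub_sq_pow_le (m : ℕ) {h R : ℝ} (hh : 0 < h) (hhR : h ≤ R) :
    ∫ s in h..R, √(R ^ 2 - s ^ 2) ^ m ≤ √(R ^ 2 - h ^ 2) ^ (m + 2) / ((m + 2) * h) := by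
  calc ∫ s in h..R, √(R ^ 2 - s ^ 2) ^ m
      ≤ ∫ s in h..R, h⁻¹ * (s * √(R ^ 2 - s ^ 2) ^ m) := by
        refine integral_mono_on hhR (Continuous.intervalIntegrable (by fun_prop) _ _)
          (Continuous.intervalIntegrable (by fun_prop) _ _) fun s hs => ?_
        rw [← mul_assoc]
        refine le_mul_of_one_le_left (by positivity) ?_
        rw [inv_mul_eq_div, one_le_div hh]
        exact hs.1
    _ = √(R ^ 2 - h ^ 2) ^ (m + 2) / ((m + 2) * h) := by
        rw [intervalIntegral.integral_const_mul,
          integral_mul_sqrt_sq_sub_sq_pow m (by linarith) hhR le_rfl,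
          sub_self, Real.sqrt_zero, zero_pow (by omega), sub_zero]
        field_simp

lemma volume_setOf_sum_sq_le (m : ℕ) {r : ℝ} (hr : 0 ≤ r) :
    volume {y : Fin m → ℝ | ∑ j, y j ^ 2 ≤ r} =
      ENNReal.ofReal (√r ^ m) * volume (closedBall (0 : EuclideanSpace ℝ (Fin m)) 1) := by
  have hball : {y : Fin m → ℝ | ∑ j, y j ^ 2 ≤ r} =
      WithLp.toLp 2 ⁻¹' closedBall (0 : EuclideanSpace ℝ (Fin m)) √r := by
    ext y
    rw [Set.mem_preimage, mem_closedBall_zero_iff, ← Real.sqrt_sq (norm_nonneg _),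
      EuclideanSpace.real_norm_sq_eq, Real.sqrt_le_sqrt_iff hr]
    rfl
  rw [hball, (PiLp.volume_preserving_toLp (Fin m)).measure_preimage
    measurableSet_closedBall.nullMeasurableSet,
    Measure.addHaar_closedBall' _ _ (Real.sqrt_nonneg r), finrank_euclideanSpace_fin]

lemma EuclideanSpace.norm_sq_eq_sq_add_sum_succAbove {m : ℕ}
    (x : EuclideanSpace ℝ (Fin (m + 1))) (i : Fin (m + 1)) :
    ‖x‖ ^ 2 = x i ^ 2 + ∑ j, x (i.succAbove j) ^ 2 := by
  rw [EuclideanSpace.real_norm_sq_eq, Fin.sum_univ_succAbove _ i]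

def ballCap {ι : Type*} [Fintype ι] (i : ι) (R h : ℝ) : Set (EuclideanSpace ℝ ι) :=
  {x | ‖x‖ ≤ R ∧ h ≤ x i}

lemma measurableSet_ballCap {ι : Type*} [Fintype ι] (i : ι) (R h : ℝ) :
    MeasurableSet (ballCap i R h) :=
  (measurableSet_le (f := (‖·‖)) (by fun_prop) measurable_const).inter
    (measurableSet_le (g := fun x : EuclideanSpace ℝ ι => x i) measurable_const (by fun_prop))

lemma volume_ballCap (m : ℕ) (i : Fin (m + 1)) {h R : ℝ} (hh : 0 ≤ h) (hhR : h ≤ R) :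
    volume (ballCap i R h) =
      ENNReal.ofReal (∫ t in h..R, √(R ^ 2 - t ^ 2) ^ m) *
        volume (closedBall (0 : EuclideanSpace ℝ (Fin m)) 1) := by
  set T : Set (ℝ × (Fin m → ℝ)) := {p | p.1 ∈ Set.Icc h R ∧ ∑ j, p.2 j ^ 2 ≤ R ^ 2 - p.1 ^ 2}
  have hT : MeasurableSet T :=
    (measurableSet_Icc.preimage measurable_fst).inter (measurableSet_le
      (f := fun p : ℝ × (Fin m → ℝ) => ∑ j, p.2 j ^ 2) (by fun_prop) (by fun_prop))
  have hΦ := (volume_preserving_piFinSuccAbove (fun _ : Fin (m + 1) => ℝ) i).comp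
    (PiLp.volume_preserving_ofLp (Fin (m + 1)))
  have hcap : ballCap i R h =
      (MeasurableEquiv.piFinSuccAbove (fun _ => ℝ) i ∘ WithLp.ofLp) ⁻¹' T := by
    ext x
    change ‖x‖ ≤ R ∧ h ≤ x i ↔
      (h ≤ x i ∧ x i ≤ R) ∧ ∑ j, x (i.succAbove j) ^ 2 ≤ R ^ 2 - x i ^ 2
    have hx := EuclideanSpace.norm_sq_eq_sq_add_sum_succAbove x i
    have hnorm := norm_nonneg x
    have hsum : 0 ≤ ∑ j, x (i.succAbove j) ^ 2 := by positivity
    constructor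
    · rintro ⟨hxR, hhx⟩
      exact ⟨⟨hhx, by nlinarith⟩, by nlinarith⟩
    · rintro ⟨⟨hhx, hxR⟩, hx'⟩
      exact ⟨by nlinarith, hhx⟩
  have hslice (t : ℝ) : volume (Prod.mk t ⁻¹' T) = (Set.Icc h R).indicator
      (fun t => ENNReal.ofReal (√(R ^ 2 - t ^ 2) ^ m) *
        volume (closedBall (0 : EuclideanSpace ℝ (Fin m)) 1)) t := by
    by_cases ht : t ∈ Set.Icc h R
    · rw [Set.indicator_of_mem ht, ← volume_setOf_sum_sq_le m (by nlinarith [ht.1, ht.2])]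
      simp only [Set.preimage_ofPred_eq, T, ht, true_and]
    · rw [Set.indicator_of_notMem ht]
      exact measure_mono_null (fun y hy => ht hy.1) measure_empty
  rw [hcap, hΦ.measure_preimage hT.nullMeasurableSet, Measure.volume_eq_prod,
    Measure.prod_apply hT, lintegral_congr hslice, lintegral_indicator measurableSet_Icc,
    lintegral_mul_const _ (by fun_prop), integral_of_le hhR, ← integral_Icc_eq_integral_Ioc,
    ofReal_integral_eq_lintegral_ofReal (Continuous.integrableOn_Icc (by fun_prop))
      (Filter.Eventually.of_forall fun t => by positivity)]

lemma volume_ballCap_le (m : ℕ) (i : Fin (m + 1)) {h R : ℝ} (hh : 0 < h) (hhR : h ≤ R) :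
    volume (ballCap i R h) ≤
      ENNReal.ofReal (√(R ^ 2 - h ^ 2) ^ (m + 2) / ((m + 2) * h)) *
        volume (closedBall (0 : EuclideanSpace ℝ (Fin m)) 1) := by
  rw [volume_ballCap m i hh.le hhR]
  gcongr
  exact integral_sqrt_sq_sub_sq_pow_le m hh hhR

lemma closedBall_single_inter_closedBall_subset {ι : Type*} [Fintype ι] [DecidableEq ι]
    (i : ι) (ρ τ : ℝ) :
    closedBall (EuclideanSpace.single i (1 : ℝ)) ρ ∩ closedBall 0 1 ⊆
      ballCap i 1 τ ∪ (EuclideanSpace.single i 1 - ·) ⁻¹' ballCap i ρ (1 - τ) := by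
  rintro x ⟨hx₁, hx₀⟩
  by_cases hx : τ ≤ x i
  · exact Or.inl ⟨mem_closedBall_zero_iff.1 hx₀, hx⟩
  · refine Or.inr ⟨?_, ?_⟩
    · rw [← dist_eq_norm, dist_comm]
      exact hx₁
    · simp only [PiLp.sub_apply, PiLp.single_apply, if_true]
      linarith

lemma volume_closedBall_single_inter_closedBall_le {ι : Type*} [Fintype ι] [DecidableEq ι]
    (i : ι) (ρ τ : ℝ) :
    volume (closedBall (EuclideanSpace.single i (1 : ℝ)) ρ ∩ closedBall 0 1) ≤
      volume (ballCap i 1 τ) + volume (ballCap i ρ (1 - τ)) := by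
  refine (measure_mono (closedBall_single_inter_closedBall_subset i ρ τ)).trans
    ((measure_union_le _ _).trans_eq ?_)
  rw [(Measure.measurePreserving_sub_left volume _).measure_preimage
    (measurableSet_ballCap i ρ _).nullMeasurableSet]

/-- For Lebesgue measure restricted to the unit ball,
`ν_d(B(e₁, √5/2)) ≤ (16/(3(d+1))) (√55/8)^{d+1} λ^{d-1}(B^{d-1})`. -/
theorem restricted_ball_mass_bound (d : ℕ) (hd : 2 ≤ d) :
    let ν : Measure (EuclideanSpace ℝ (Fin d)) :=
      volume.restrict (closedBall (0 : EuclideanSpace ℝ (Fin d)) 1)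
    ν (closedBall (EuclideanSpace.single (⟨0, by omega⟩ : Fin d) (1 : ℝ)) (Real.sqrt 5 / 2)) ≤
      ENNReal.ofReal (16 / (3 * (d + 1)) * (Real.sqrt 55 / 8) ^ (d + 1) *
        (volume (closedBall (0 : EuclideanSpace ℝ (Fin (d - 1))) 1)).toReal) := by
  intro ν
  obtain ⟨n, rfl⟩ : ∃ n, d = n + 2 := ⟨d - 2, by omega⟩
  set i₀ : Fin (n + 2) := ⟨0, by omega⟩
  have h55 : √(55 / 64) = √55 / 8 := by
    rw [Real.sqrt_div' _ (by norm_num), show (64 : ℝ) = 8 ^ 2 by norm_num,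
      Real.sqrt_sq (by norm_num)]
  have h5 : (√5 / 2) ^ 2 = 5 / 4 := by
    rw [div_pow, Real.sq_sqrt (by norm_num)]
    norm_num
  have hR₁ : √(1 ^ 2 - (3 / 8) ^ 2) = √55 / 8 := by rw [← h55]; norm_num
  have hR₂ : √((√5 / 2) ^ 2 - (1 - 3 / 8) ^ 2) = √55 / 8 := by rw [h5, ← h55]; norm_num
  have h58 : 1 - 3 / 8 ≤ √5 / 2 := by nlinarith [Real.sqrt_nonneg 5]
  calc ν (closedBall (EuclideanSpace.single i₀ 1) (√5 / 2))
      = volume (closedBall (EuclideanSpace.single i₀ 1) (√5 / 2) ∩ closedBall 0 1) :=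
        Measure.restrict_apply' measurableSet_closedBall
    _ ≤ volume (ballCap i₀ 1 (3 / 8)) + volume (ballCap i₀ (√5 / 2) (1 - 3 / 8)) :=
        volume_closedBall_single_inter_closedBall_le i₀ _ _
    _ ≤ _ := add_le_add (volume_ballCap_le (n + 1) i₀ (by norm_num) (by norm_num))
          (volume_ballCap_le (n + 1) i₀ (by norm_num) h58)
    _ ≤ _ := by
        rw [hR₁, hR₂, ← add_mul, ← ENNReal.ofReal_add (by positivity) (by positivity),
          ENNReal.ofReal_mul (by positivity), ENNReal.ofReal_toReal measure_closedBall_lt_top.ne]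
        gcongr
        have hX : 0 ≤ (√55 / 8) ^ (n + 3) := by positivity
        generalize (√55 / 8) ^ (n + 3) = X at hX ⊢
        push_cast
        field_simp
        nlinarith [mul_nonneg hX n.cast_nonneg]
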